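/- Let k and l be integers with k, l ≥ 2, and let p be a prime with p > (k·l)^{10}. Then for any integers a, b, n with p ∤ a, p ∤ b and p ∤ n, the congruence n ≡ a·u^k + b·v^l (mod p) possesses a solution in integers u, v with p ∤ uv. -/

import Mathlib

/-!
Write `q = #F`. Splitting the solutions according to the value `y = A u ^ k` and expressing the
number of `m`-th roots of `c` as `∑_{χ ^ m = 1} χ c`, the number of solutions with `u v ≠ 0`
becomes `∑_{χ ^ k = 1, ψ ^ l = 1} χ(A⁻¹) ψ(B⁻¹) (χψ)(N) J(χ, ψ)`. The term `χ = ψ = 1` is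
`J(1, 1) = q - 2`, every other Jacobi sum has absolute value at most `√q`, and there are at most
`k l - 1` other terms, so the number of solutions is at least `q - 2 - (k l - 1) √q`, which is
positive as soon as `√q ≥ k l + 1`.
-/

open Finset

namespace MulChar

variable {F : Type*} [Field F] [Fintype F]

noncomputable instance : Fintype (MulChar F ℂ) := .ofFinite _

lemma norm_apply_eq_one {R : Type*} [CommRing R] [Fintype Rˣ] (χ : MulChar R ℂ) {a : R}
    (ha : IsUnit a) : ‖χ a‖ = 1 := by
  have := Complex.norm_eq_one_of_mem_rootsOfUnity (χ.apply_mem_rootsOfUnity ha.unit)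
  rwa [coe_equivToUnitHom, IsUnit.unit_spec] at this

lemma star_jacobiSum (χ ψ : MulChar F ℂ) : star (jacobiSum χ ψ) = jacobiSum χ⁻¹ ψ⁻¹ := by
  simp only [jacobiSum, star_sum, star_mul', star_apply']

lemma norm_jacobiSum_eq_sqrt {χ ψ : MulChar F ℂ} (hχ : χ ≠ 1) (hψ : ψ ≠ 1) (hχψ : χ * ψ ≠ 1) :
    ‖jacobiSum χ ψ‖ = √(Fintype.card F) := by
  have hchar : ringChar ℂ ≠ ringChar F := by
    simpa only [ringChar.eq_zero] using (CharP.ringChar_ne_zero_of_finite F).symm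
  have h := jacobiSum_mul_jacobiSum_inv hchar hχ hψ hχψ
  rw [← star_jacobiSum, Complex.star_def, Complex.mul_conj, ← Complex.ofReal_natCast,
    Complex.ofReal_inj] at h
  rw [Complex.norm_def, h]

lemma sum_apply_mul_apply_sub {R : Type*} [CommRing R] (χ ψ : MulChar F R) {N : F} (hN : N ≠ 0) :
    ∑ y, χ y * ψ (N - y) = (χ * ψ) N * jacobiSum χ ψ := by
  rw [jacobiSum, mul_sum, ← Equiv.sum_comp (Equiv.mulLeft₀ N hN)]
  refine sum_congr rfl fun x _ ↦ ?_
  change χ (N * x) * ψ (N - N * x) = _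
  rw [show N - N * x = N * (1 - x) by ring, map_mul, map_mul, mul_apply]
  ring

variable [DecidableEq F]

lemma card_pow_eq_one_le {m : ℕ} (hm : m ≠ 0) : #{χ : MulChar F ℂ | χ ^ m = 1} ≤ m := by
  obtain ⟨e⟩ := mulEquiv_units F ℂ
  calc #{χ : MulChar F ℂ | χ ^ m = 1} = #{u : Fˣ | u ^ m = 1} :=
        card_equiv e.toEquiv fun χ ↦ by
          simp only [mem_filter, mem_univ, true_and, MulEquiv.toEquiv_eq_coe, EquivLike.coe_coe,
            ← map_pow, MulEquiv.map_eq_one_iff]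
    _ ≤ m := IsCyclic.card_pow_eq_one_le (Nat.pos_of_ne_zero hm)

lemma norm_jacobiSum_le_sqrt {χ ψ : MulChar F ℂ} (h : χ ≠ 1 ∨ ψ ≠ 1) :
    ‖jacobiSum χ ψ‖ ≤ √(Fintype.card F) := by
  have one_le : (1 : ℝ) ≤ √(Fintype.card F) := Real.one_le_sqrt.mpr (mod_cast Fintype.card_pos)
  rcases eq_or_ne χ 1 with rfl | hχ
  · rw [jacobiSum_one_nontrivial (h.resolve_left (not_not.mpr rfl)), norm_neg, norm_one]
    exact one_le
  rcases eq_or_ne ψ 1 with rfl | hψ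
  · rw [jacobiSum_comm, jacobiSum_one_nontrivial hχ, norm_neg, norm_one]
    exact one_le
  rcases eq_or_ne (χ * ψ) 1 with hχψ | hχψ
  · rw [eq_inv_of_mul_eq_one_right hχψ, jacobiSum_nontrivial_inv hχ, norm_neg,
      χ.norm_apply_eq_one (neg_ne_zero.mpr one_ne_zero).isUnit]
    exact one_le
  · exact (norm_jacobiSum_eq_sqrt hχ hψ hχψ).le

lemma sum_characters_eq (a : F) :
    ∑ χ : MulChar F ℂ, χ a = if a = 1 then (Fintype.card F - 1 : ℂ) else 0 := by
  split_ifs with ha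
  · have hcard := card_eq_card_units_of_hasEnoughRootsOfUnity F ℂ
    rw [Nat.card_eq_fintype_card, Nat.card_eq_fintype_card, Fintype.card_units] at hcard
    simp [ha, hcard, Nat.cast_sub Fintype.card_pos]
  · obtain ⟨χ, hχ⟩ := exists_apply_ne_one_of_hasEnoughRootsOfUnity F ℂ ha
    refine eq_zero_of_mul_eq_self_left hχ ?_
    simp only [Finset.mul_sum, ← MulChar.mul_apply]
    exact Fintype.sum_bijective _ (Group.mulLeft_bijective χ) _ _ fun _ ↦ rfl

lemma sum_apply_inv_pow {m : ℕ} (hm : m ≠ 0) (χ : MulChar F ℂ) :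
    ∑ u : F, χ u⁻¹ ^ m = if χ ^ m = 1 then (Fintype.card F - 1 : ℂ) else 0 := by
  rw [Fintype.sum_equiv (Equiv.inv F) _ (χ ^ m) fun u ↦ (pow_apply' χ hm u⁻¹).symm]
  split_ifs with h
  · rw [h, sum_one_eq_card_units, Fintype.card_units, Nat.cast_sub Fintype.card_pos, Nat.cast_one]
  · exact sum_eq_zero_of_ne_one h

lemma sum_characters_apply_mul_apply_inv_pow {m : ℕ} (hm : m ≠ 0) (c u : F) :
    ∑ χ : MulChar F ℂ, χ c * χ u⁻¹ ^ m =
      if u ≠ 0 ∧ u ^ m = c then (Fintype.card F - 1 : ℂ) else 0 := by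
  rcases eq_or_ne u 0 with rfl | hu
  · simp [zero_pow hm]
  · have (χ : MulChar F ℂ) : χ c * χ u⁻¹ ^ m = χ (c * (u ^ m)⁻¹) := by
      rw [map_mul, ← inv_pow, map_pow]
    simp_rw [this, sum_characters_eq, mul_inv_eq_one₀ (pow_ne_zero m hu), eq_comm (a := c), ne_eq,
      hu, not_false_eq_true, true_and]

/-- This holds for `c = 0` too, since every character, the trivial one included, vanishes at `0`. -/
theorem card_pow_eq_eq_sum_apply {m : ℕ} (hm : m ≠ 0) (c : F) :
    (#{u | u ≠ 0 ∧ u ^ m = c} : ℂ) = ∑ χ : MulChar F ℂ with χ ^ m = 1, χ c := by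
  have hq : (Fintype.card F - 1 : ℂ) ≠ 0 :=
    sub_ne_zero.mpr (mod_cast Fintype.one_lt_card.ne')
  refine mul_left_cancel₀ hq ?_
  calc (Fintype.card F - 1 : ℂ) * #{u | u ≠ 0 ∧ u ^ m = c}
      = ∑ u : F, ∑ χ : MulChar F ℂ, χ c * χ u⁻¹ ^ m := by
        simp_rw [sum_characters_apply_mul_apply_inv_pow hm, ← sum_filter, sum_const, nsmul_eq_mul,
          mul_comm]
    _ = ∑ χ : MulChar F ℂ, χ c * ∑ u : F, χ u⁻¹ ^ m := by
        rw [sum_comm]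
        exact sum_congr rfl fun χ _ ↦ (Finset.mul_sum ..).symm
    _ = (Fintype.card F - 1 : ℂ) * ∑ χ : MulChar F ℂ with χ ^ m = 1, χ c := by
        simp_rw [sum_apply_inv_pow hm, mul_ite, mul_zero, ← sum_filter, mul_sum, mul_comm]

end MulChar

open MulChar

variable {F : Type*} [Field F] [Fintype F] [DecidableEq F]

def diagonalSolutions (k l : ℕ) (A B N : F) : Finset (F × F) :=
  {x | x.1 ≠ 0 ∧ x.2 ≠ 0 ∧ A * x.1 ^ k + B * x.2 ^ l = N}

lemma card_diagonalSolutions_eq_sum_card_mul_card (k l : ℕ) {A B : F} (hA : A ≠ 0) (hB : B ≠ 0)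
    (N : F) :
    #(diagonalSolutions k l A B N) =
      ∑ y : F, #{u | u ≠ 0 ∧ u ^ k = A⁻¹ * y} * #{v | v ≠ 0 ∧ v ^ l = B⁻¹ * (N - y)} := by
  rw [card_eq_sum_card_fiberwise (f := fun x ↦ A * x.1 ^ k) (t := univ)
    fun _ _ ↦ mem_coe.2 (mem_univ _)]
  refine sum_congr rfl fun y _ ↦ ?_
  rw [← card_product]
  congr 1
  ext ⟨u, v⟩
  simp only [diagonalSolutions, mem_filter, mem_univ, true_and, mem_product,
    eq_inv_mul_iff_mul_eq₀ hA, eq_inv_mul_iff_mul_eq₀ hB]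
  constructor
  · rintro ⟨⟨hu, hv, h⟩, rfl⟩
    exact ⟨⟨hu, rfl⟩, hv, by linear_combination h⟩
  · rintro ⟨⟨hu, rfl⟩, hv, h⟩
    exact ⟨⟨hu, hv, by linear_combination h⟩, rfl⟩

theorem card_diagonalSolutions_eq_sum_jacobiSum {k l : ℕ} (hk : k ≠ 0) (hl : l ≠ 0) {A B N : F}
    (hA : A ≠ 0) (hB : B ≠ 0) (hN : N ≠ 0) :
    (#(diagonalSolutions k l A B N) : ℂ) =
      ∑ χ : MulChar F ℂ with χ ^ k = 1, ∑ ψ : MulChar F ℂ with ψ ^ l = 1,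
        χ A⁻¹ * ψ B⁻¹ * (χ * ψ) N * jacobiSum χ ψ := by
  simp_rw [card_diagonalSolutions_eq_sum_card_mul_card k l hA hB, Nat.cast_sum, Nat.cast_mul,
    card_pow_eq_eq_sum_apply hk, card_pow_eq_eq_sum_apply hl, sum_mul_sum]
  rw [sum_comm]
  refine sum_congr rfl fun χ _ ↦ ?_
  rw [sum_comm]
  refine sum_congr rfl fun ψ _ ↦ ?_
  rw [mul_assoc, ← sum_apply_mul_apply_sub χ ψ hN, mul_sum]
  refine sum_congr rfl fun y _ ↦ ?_
  rw [map_mul, map_mul]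
  ring

theorem abs_card_diagonalSolutions_sub_le {k l : ℕ} (hk : k ≠ 0) (hl : l ≠ 0) {A B N : F}
    (hA : A ≠ 0) (hB : B ≠ 0) (hN : N ≠ 0) :
    |(#(diagonalSolutions k l A B N) : ℝ) - (Fintype.card F - 2)| ≤
      (k * l - 1) * √(Fintype.card F) := by
  set K : Finset (MulChar F ℂ) := {χ | χ ^ k = 1}
  set L : Finset (MulChar F ℂ) := {ψ | ψ ^ l = 1}
  set f : MulChar F ℂ × MulChar F ℂ → ℂ :=
    fun x ↦ x.1 A⁻¹ * x.2 B⁻¹ * (x.1 * x.2) N * jacobiSum x.1 x.2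
  have hone : ((1, 1) : MulChar F ℂ × MulChar F ℂ) ∈ K ×ˢ L := by simp [K, L]
  have hf_one : f (1, 1) = Fintype.card F - 2 := by
    simp only [f, mul_one, one_apply (inv_ne_zero hA).isUnit, one_apply (inv_ne_zero hB).isUnit,
      one_apply hN.isUnit, jacobiSum_one_one, one_mul]
  have herror : ((#(diagonalSolutions k l A B N) - (Fintype.card F - 2) : ℝ) : ℂ) =
      ∑ x ∈ (K ×ˢ L).erase (1, 1), f x := by
    rw [eq_sub_of_add_eq' (add_sum_erase _ f hone), hf_one, sum_product,
      ← card_diagonalSolutions_eq_sum_jacobiSum hk hl hA hB hN]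
    push_cast
    rfl
  have hterm (x) (hx : x ∈ (K ×ˢ L).erase (1, 1)) : ‖f x‖ ≤ √(Fintype.card F) := by
    obtain ⟨χ, ψ⟩ := x
    simp only [f, norm_mul, norm_apply_eq_one _ (inv_ne_zero hA).isUnit,
      norm_apply_eq_one _ (inv_ne_zero hB).isUnit, norm_apply_eq_one _ hN.isUnit, one_mul]
    refine norm_jacobiSum_le_sqrt ?_
    exact not_and_or.1 fun h ↦ (mem_erase.1 hx).1 (Prod.ext h.1 h.2)
  have hcard : (#((K ×ˢ L).erase (1, 1)) : ℝ) ≤ k * l - 1 := by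
    rw [cast_card_erase_of_mem hone, card_product]
    gcongr
    exact_mod_cast Nat.mul_le_mul (card_pow_eq_one_le hk) (card_pow_eq_one_le hl)
  calc |(#(diagonalSolutions k l A B N) : ℝ) - (Fintype.card F - 2)|
      = ‖∑ x ∈ (K ×ˢ L).erase (1, 1), f x‖ := by
        rw [← herror, Complex.norm_real, Real.norm_eq_abs]
    _ ≤ ∑ x ∈ (K ×ˢ L).erase (1, 1), ‖f x‖ := norm_sum_le _ _
    _ ≤ #((K ×ˢ L).erase (1, 1)) * √(Fintype.card F) := by
        rw [← nsmul_eq_mul, ← sum_const]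
        exact sum_le_sum hterm
    _ ≤ (k * l - 1) * √(Fintype.card F) := by gcongr

theorem exists_mul_pow_add_mul_pow_eq {k l : ℕ} (hk : k ≠ 0) (hl : l ≠ 0)
    (hq : (k * l + 1) ^ 2 ≤ Fintype.card F) {A B N : F} (hA : A ≠ 0) (hB : B ≠ 0) (hN : N ≠ 0) :
    ∃ u v : F, u ≠ 0 ∧ v ≠ 0 ∧ A * u ^ k + B * v ^ l = N := by
  suffices (diagonalSolutions k l A B N).Nonempty by
    obtain ⟨⟨u, v⟩, h⟩ := this
    exact ⟨u, v, by simpa [diagonalSolutions] using h⟩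
  rw [← card_pos, ← Nat.cast_pos (α := ℝ)]
  have hbound := abs_le.1 (abs_card_diagonalSolutions_sub_le hk hl hA hB hN)
  have hs : (k * l + 1 : ℝ) ≤ √(Fintype.card F) := Real.le_sqrt_of_sq_le (mod_cast hq)
  have hsq : √(Fintype.card F : ℝ) ^ 2 = Fintype.card F := Real.sq_sqrt (Nat.cast_nonneg _)
  have hkl : (1 : ℝ) ≤ k * l := mod_cast Nat.one_le_iff_ne_zero.2 (mul_ne_zero hk hl)
  nlinarith [mul_nonneg (sub_nonneg.2 hs) (Real.sqrt_nonneg (Fintype.card F : ℝ))]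

/-- Solubility of the diagonal congruence `n ≡ a·u^k + b·v^l (mod p)` with `p ∤ uv`, for a
prime `p > (kl)^10`; a consequence of Weil's bounds. -/
theorem weil_diagonal_congruence (k l : ℕ) (hk : 2 ≤ k) (hl : 2 ≤ l)
    (p : ℕ) (hp : p.Prime) (hbig : (k * l) ^ 10 < p)
    (a b n : ℤ) (ha : ¬ (p : ℤ) ∣ a) (hb : ¬ (p : ℤ) ∣ b) (hn : ¬ (p : ℤ) ∣ n) :
    ∃ u v : ℤ, ¬ (p : ℤ) ∣ u * v ∧ a * u ^ k + b * v ^ l ≡ n [ZMOD (p : ℤ)] := by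
  have : Fact p.Prime := ⟨hp⟩
  have cast_ne_zero {x : ℤ} (hx : ¬ (p : ℤ) ∣ x) : (x : ZMod p) ≠ 0 :=
    fun h ↦ hx ((ZMod.intCast_zmod_eq_zero_iff_dvd x p).1 h)
  have hq : (k * l + 1) ^ 2 ≤ Fintype.card (ZMod p) := by
    have h4 : 4 ≤ k * l := Nat.mul_le_mul hk hl
    calc (k * l + 1) ^ 2 ≤ (k * l * (k * l)) ^ 2 := Nat.pow_le_pow_left (by nlinarith) 2
      _ = (k * l) ^ 4 := by ring
      _ ≤ (k * l) ^ 10 := Nat.pow_le_pow_right (by omega) (by norm_num)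
      _ ≤ Fintype.card (ZMod p) := by rw [ZMod.card]; exact hbig.le
  obtain ⟨u, v, hu, hv, huv⟩ := exists_mul_pow_add_mul_pow_eq (by omega) (by omega) hq
    (cast_ne_zero ha) (cast_ne_zero hb) (cast_ne_zero hn)
  obtain ⟨u, rfl⟩ := ZMod.intCast_surjective u
  obtain ⟨v, rfl⟩ := ZMod.intCast_surjective v
  refine ⟨u, v, fun h ↦ ?_, (ZMod.intCast_eq_intCast_iff _ _ _).1 (by push_cast; exact huv)⟩
  rw [← ZMod.intCast_zmod_eq_zero_iff_dvd, Int.cast_mul] at h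
  exact mul_ne_zero hu hv h
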